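/- Let H be a complex separable infinite-dimensional Hilbert space, let E ⊆ c₀ be a Banach symmetric sequence space, and let C_E be the associated Banach symmetric ideal. If x_n ∈ C_E are positive operators with x_{n+1} ≤ x_n for all n and x_n ↓ 0, then the absolutely convex hull A of the set {0, x_1, x_2, …} in the real Banach space C_E^h = { x ∈ C_E : x = x* } is a Rosenthal set: every sequence in A has a weakly Cauchy subsequence, i.e. a subsequence {y_{n_i}} such that the limit lim_i f(y_{n_i}) exists for every continuous real-linear functional f on C_E^h. -/

import Mathlib

open scoped InnerProductSpace
open Filter Topology

noncomputable section

/-- The non-increasing rearrangement `x*` of a bounded real sequence: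
`x*_n = inf_{|F| ≤ n} sup_{k ∉ F} |x k|`. -/
noncomputable def decRearrange (x : ℕ → ℝ) (n : ℕ) : ℝ :=
  sInf {c : ℝ | ∃ F : Finset ℕ, F.card ≤ n ∧ ∀ k ∉ F, |x k| ≤ c}

/-- A Banach symmetric sequence space: a nonzero linear subspace of `ℓ∞` (real bounded
sequences) equipped with a complete norm such that `x* ≤ y*` pointwise and `y ∈ E` imply
`x ∈ E` with `‖x‖_E ≤ ‖y‖_E`. -/
structure BanachSymmSeqSpace where
  carrier : Set (ℕ → ℝ)
  bdd : ∀ x ∈ carrier, ∃ C : ℝ, ∀ n, |x n| ≤ C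
  zero_mem : (0 : ℕ → ℝ) ∈ carrier
  add_mem : ∀ x ∈ carrier, ∀ y ∈ carrier, x + y ∈ carrier
  smul_mem : ∀ (c : ℝ), ∀ x ∈ carrier, c • x ∈ carrier
  nontrivial : ∃ x ∈ carrier, x ≠ 0
  nrm : (ℕ → ℝ) → ℝ
  nrm_zero : nrm 0 = 0
  nrm_pos : ∀ x ∈ carrier, x ≠ 0 → 0 < nrm x
  nrm_smul : ∀ (c : ℝ), ∀ x ∈ carrier, nrm (c • x) = |c| * nrm x
  nrm_triangle : ∀ x ∈ carrier, ∀ y ∈ carrier, nrm (x + y) ≤ nrm x + nrm y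
  complete : ∀ u : ℕ → ℕ → ℝ, (∀ n, u n ∈ carrier) →
    (∀ ε : ℝ, 0 < ε → ∃ N, ∀ m ≥ N, ∀ k ≥ N, nrm (u m - u k) < ε) →
    ∃ x ∈ carrier, ∀ ε : ℝ, 0 < ε → ∃ N, ∀ m ≥ N, nrm (u m - x) < ε
  symmetric : ∀ x : ℕ → ℝ, ∀ y ∈ carrier, (∃ C : ℝ, ∀ n, |x n| ≤ C) →
    (∀ n, decRearrange x n ≤ decRearrange y n) → x ∈ carrier ∧ nrm x ≤ nrm y

/-- `E ⊆ c₀`: every element of `E` tends to zero. -/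
def BanachSymmSeqSpace.SubsetC0 (S : BanachSymmSeqSpace) : Prop :=
  ∀ x ∈ S.carrier, Filter.Tendsto x Filter.atTop (nhds 0)

/-- The Fatou property of a Banach symmetric sequence space. -/
def BanachSymmSeqSpace.Fatou (S : BanachSymmSeqSpace) : Prop :=
  ∀ a : ℕ → ℕ → ℝ, (∀ k, a k ∈ S.carrier) → (∀ k n, 0 ≤ a k n) →
    (∀ k n, a k n ≤ a (k + 1) n) → (∃ C : ℝ, ∀ k, S.nrm (a k) ≤ C) →
    ∃ b ∈ S.carrier, (∀ n, IsLUB {r : ℝ | ∃ k, r = a k n} (b n)) ∧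
      IsLUB {r : ℝ | ∃ k, r = S.nrm (a k)} (S.nrm b)

/-- `E = ℓ₂` as a set of sequences. -/
def ellTwo : Set (ℕ → ℝ) := {x : ℕ → ℝ | Summable fun n => (x n) ^ 2}

section OperatorIdeal

variable {H : Type*} [NormedAddCommGroup H] [InnerProductSpace ℂ H] [CompleteSpace H]

/-- The `n`-th singular value (approximation number) of an operator:
`s_n(x) = inf { ‖x - F‖ : rank F ≤ n }` (so `s_0(x) = ‖x‖`). For compact operators this is
the `n`-th eigenvalue (in decreasing order) of `(x*x)^{1/2}`. -/
noncomputable def singVal (x : H →L[ℂ] H) (n : ℕ) : ℝ :=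
  sInf {c : ℝ | ∃ F : H →L[ℂ] H, FiniteDimensional ℂ (LinearMap.range (F : H →ₗ[ℂ] H)) ∧
    Module.finrank ℂ (LinearMap.range (F : H →ₗ[ℂ] H)) ≤ n ∧ ‖x - F‖ = c}

/-- The Banach symmetric ideal `C_E` of compact operators whose singular value sequence
belongs to `E`. -/
def CE (S : BanachSymmSeqSpace) : Set (H →L[ℂ] H) :=
  {x | IsCompactOperator (⇑x) ∧ (fun n => singVal x n) ∈ S.carrier}

/-- The norm `‖x‖_{C_E} = ‖{s_n(x)}‖_E` of the Banach symmetric ideal `C_E`. -/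
noncomputable def CEnorm (S : BanachSymmSeqSpace) (x : H →L[ℂ] H) : ℝ :=
  S.nrm (fun n => singVal x n)

/-- A trace class operator: a compact operator with summable singular values. -/
def IsTraceClass (z : H →L[ℂ] H) : Prop :=
  IsCompactOperator (⇑z) ∧ Summable fun n => singVal z n

/-- The Köthe dual `C_E^× = { y ∈ B(H) : x y is trace class for every x ∈ C_E }`. -/
def KDual (S : BanachSymmSeqSpace) : Set (H →L[ℂ] H) :=
  {y : H →L[ℂ] H | ∀ x ∈ CE (H := H) S, IsTraceClass (x * y)}

/-- The trace of an operator computed with respect to a Hilbert basis `b`: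
`tr z = Σ_i ⟪b i, z (b i)⟫` (basis independent for trace class operators). -/
noncomputable def traceB (b : HilbertBasis ℕ ℂ H) (z : H →L[ℂ] H) : ℂ :=
  ∑' i, ⟪b i, z (b i)⟫_ℂ

/-- The weak topology `σ(C_E, C_E^×)` on `C_E`, generated by the functionals
`x ↦ tr (x y)`, `y ∈ C_E^×`. -/
noncomputable def sigmaTop (S : BanachSymmSeqSpace) (b : HilbertBasis ℕ ℂ H) :
    TopologicalSpace {x : H →L[ℂ] H // x ∈ CE (H := H) S} :=
  ⨅ y : {y : H →L[ℂ] H // y ∈ KDual (H := H) S},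
    TopologicalSpace.induced (fun x => traceB b (x.1 * y.1)) inferInstance

/-- The ball topology `b_{C_E}`: the coarsest topology in which every closed norm ball
of `(C_E, ‖·‖_{C_E})` is closed. -/
noncomputable def ballTop (S : BanachSymmSeqSpace) :
    TopologicalSpace {x : H →L[ℂ] H // x ∈ CE (H := H) S} :=
  TopologicalSpace.generateFrom
    {s | ∃ (c : {x : H →L[ℂ] H // x ∈ CE (H := H) S}) (ε : ℝ), 0 < ε ∧
      s = {y : {x : H →L[ℂ] H // x ∈ CE (H := H) S} | CEnorm S (y.1 - c.1) ≤ ε}ᶜ}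

/-- `W` is a surjective (complex-)linear isometry of the Banach symmetric ideal `C_E`. -/
def SurjLinearIsomOn (S : BanachSymmSeqSpace) (W : (H →L[ℂ] H) → (H →L[ℂ] H)) : Prop :=
  (∀ x ∈ CE (H := H) S, W x ∈ CE (H := H) S) ∧
  (∀ y ∈ CE (H := H) S, ∃ x ∈ CE (H := H) S, W x = y) ∧
  (∀ x ∈ CE (H := H) S, ∀ y ∈ CE (H := H) S, W (x + y) = W x + W y) ∧
  (∀ (c : ℂ), ∀ x ∈ CE (H := H) S, W (c • x) = c • W x) ∧
  (∀ x ∈ CE (H := H) S, CEnorm S (W x) = CEnorm S x)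

end OperatorIdeal

end

/-- The real Banach space `C_E^h` of self-adjoint elements of `C_E`. -/
def CEh {H : Type*} [NormedAddCommGroup H] [InnerProductSpace ℂ H] [CompleteSpace H]
    (S : BanachSymmSeqSpace) : Set (H →L[ℂ] H) :=
  {x : H →L[ℂ] H | x ∈ CE (H := H) S ∧ IsSelfAdjoint x}

/-- `f` is a continuous (bounded) real-linear functional on `C_E^h`. -/
def RealFunctionalOn {H : Type*} [NormedAddCommGroup H] [InnerProductSpace ℂ H]
    [CompleteSpace H] (S : BanachSymmSeqSpace) (f : (H →L[ℂ] H) → ℝ) : Prop :=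
  (∀ a ∈ CEh (H := H) S, ∀ b ∈ CEh (H := H) S, f (a + b) = f a + f b) ∧
  (∀ (c : ℝ), ∀ a ∈ CEh (H := H) S, f (((c : ℂ)) • a) = c * f a) ∧
  (∃ M : ℝ, ∀ a ∈ CEh (H := H) S, |f a| ≤ M * CEnorm S a)

/-!
For a bounded functional `f`, the sequence `n ↦ f (x n)` is Cauchy. Indeed, along any increasing
`u`, every finite sum of increments `x (u i) - x (u (i + 1))` lies between `0` and `x 0`; since
`0 ≤ a ≤ b` forces `s_{2n}(a) ≤ s_n(b)` and the dilation `D₂` is bounded on `E`, such sums have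
`C_E`-norm at most `2 ‖x 0‖`, which bounds the variation of `f ∘ x` along `u`.

Write `f (x i) = L + e i` with `e i → 0`. A hull element `∑ c i • x i` is then sent to
`L ∑ c i + ∑ c i e i`. By compactness of `[-1, 1]^ℕ × [-1, 1]` one subsequence, chosen once for
all `f`, makes the coefficients converge pointwise and their sums converge, and on the unit ball
of `ℓ¹` pointwise convergence implies convergence of `∑ c i e i` for every `e ∈ c₀`.
-/

open Finset

lemma sum_abs_le_two_mul_of_forall_abs_sum_le {ι : Type*} (s : Finset ι) (b : ι → ℝ) {B : ℝ}
    (h : ∀ A ⊆ s, |∑ i ∈ A, b i| ≤ B) : ∑ i ∈ s, |b i| ≤ 2 * B := by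
  classical
  have hpos : ∑ i ∈ s with 0 ≤ b i, |b i| = ∑ i ∈ s with 0 ≤ b i, b i :=
    sum_congr rfl fun i hi => abs_of_nonneg (mem_filter.mp hi).2
  have hneg : ∑ i ∈ s with ¬0 ≤ b i, |b i| = -∑ i ∈ s with ¬0 ≤ b i, b i := by
    rw [← sum_neg_distrib]
    exact sum_congr rfl fun i hi => abs_of_neg (not_le.mp (mem_filter.mp hi).2)
  rw [← sum_filter_add_sum_filter_not s (fun i => 0 ≤ b i), hpos, hneg]
  linarith [le_abs_self (∑ i ∈ s with 0 ≤ b i, b i), neg_abs_le (∑ i ∈ s with ¬0 ≤ b i, b i),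
    h _ (filter_subset (fun i => 0 ≤ b i) s), h _ (filter_subset (fun i => ¬0 ≤ b i) s)]

lemma cauchySeq_of_sum_dist_le {α : Type*} [PseudoMetricSpace α] {a : ℕ → α} {C : ℝ}
    (h : ∀ u : ℕ → ℕ, Monotone u → ∀ n, ∑ i ∈ range n, dist (a (u (i + 1))) (a (u i)) ≤ C) :
    CauchySeq a := by
  rw [Metric.cauchySeq_iff']
  by_contra! hfar
  obtain ⟨ε, hε, hfar⟩ := hfar
  choose next hnext_ge hnext_far using hfar
  set u : ℕ → ℕ := fun k => next^[k] 0
  have hu_succ : ∀ k, u (k + 1) = next (u k) := fun k => Function.iterate_succ_apply' next k 0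
  have hu : Monotone u := monotone_nat_of_le_succ fun k => (hu_succ k).symm ▸ hnext_ge (u k)
  obtain ⟨n, hn⟩ := exists_nat_gt (C / ε)
  have hlow : n * ε ≤ ∑ i ∈ range n, dist (a (u (i + 1))) (a (u i)) := by
    simpa using card_nsmul_le_sum (range n) _ ε fun i _ => (hu_succ i).symm ▸ hnext_far (u i)
  rw [div_lt_iff₀ hε] at hn
  linarith [h u hu n]

/-- Split off the first `J` terms: the rest is uniformly small because `‖a k‖₁ ≤ 1` and `e → 0`. -/
lemma tendsto_sum_mul_of_tendsto_zero {a : ℕ → ℕ → ℝ} {K : ℕ → ℕ} {c e : ℕ → ℝ}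
    (ha : ∀ k N, ∑ i ∈ range N, |a k i| ≤ 1) (hsupp : ∀ k i, K k ≤ i → a k i = 0)
    (hlim : ∀ i, Tendsto (fun k => a k i) atTop (𝓝 (c i))) (he : Tendsto e atTop (𝓝 0)) :
    Tendsto (fun k => ∑ i ∈ range (K k), a k i * e i) atTop (𝓝 (∑' i, c i * e i)) := by
  have hc : Summable fun i => |c i| := summable_of_sum_range_le (fun _ => abs_nonneg _) fun N =>
    le_of_tendsto' (tendsto_finsetSum _ fun i _ => (hlim i).abs) fun k => ha k N
  have hce : Summable fun i => c i * e i := hc.of_norm_bounded_eventually_nat <| by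
    have he' : Tendsto (fun i => |e i|) atTop (𝓝 0) := by simpa using he.abs
    filter_upwards [he'.eventually_le_const one_pos] with i hi
    rw [Real.norm_eq_abs, abs_mul]
    exact mul_le_of_le_one_right (abs_nonneg _) hi
  refine TendstoUniformly.tendsto_of_eventually_tendsto
    (F := fun J k => ∑ i ∈ range J, a k i * e i) ?_
    (Eventually.of_forall fun J => tendsto_finsetSum _ fun i _ => (hlim i).mul_const (e i))
    hce.hasSum.tendsto_sum_nat
  rw [Metric.tendstoUniformly_iff]
  intro δ hδ
  obtain ⟨J₀, hJ₀⟩ := Metric.tendsto_atTop.mp he (δ / 2) (half_pos hδ)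
  filter_upwards [eventually_ge_atTop J₀] with J hJ k
  set N := max J (K k)
  have hN : ∑ i ∈ range (K k), a k i * e i = ∑ i ∈ range N, a k i * e i :=
    sum_subset (range_subset_range.2 (le_max_right _ _)) fun i _ hi => by
      rw [hsupp k i (not_lt.mp (mt mem_range.mpr hi)), zero_mul]
  rw [Real.dist_eq, hN, ← sum_range_add_sum_Ico _ (le_max_left J (K k)), add_sub_cancel_left]
  calc |∑ i ∈ Ico J N, a k i * e i| ≤ ∑ i ∈ Ico J N, |a k i| * (δ / 2) :=
        (abs_sum_le_sum_abs _ _).trans <| sum_le_sum fun i hi => by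
          rw [abs_mul]
          gcongr
          simpa using (hJ₀ i ((mem_Ico.mp hi).1.trans' hJ)).le
    _ ≤ ∑ i ∈ range N, |a k i| * (δ / 2) :=
        sum_le_sum_of_subset_of_nonneg (fun i hi => mem_range.mpr (mem_Ico.mp hi).2)
          fun _ _ _ => by positivity
    _ ≤ 1 * (δ / 2) := by
        rw [← sum_mul]
        gcongr
        exact ha k N
    _ < δ := by linarith

lemma sum_sub_le_sub_of_antitone {G : Type*} [AddCommGroup G] [PartialOrder G]
    [IsOrderedAddMonoid G] {x : ℕ → G} (hx : Antitone x) {u : ℕ → ℕ} (hu : Monotone u)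
    {A : Finset ℕ} {n : ℕ} (hA : A ⊆ range n) :
    ∑ i ∈ A, (x (u i) - x (u (i + 1))) ≤ x (u 0) - x (u n) :=
  calc ∑ i ∈ A, (x (u i) - x (u (i + 1))) ≤ ∑ i ∈ range n, (x (u i) - x (u (i + 1))) :=
        sum_le_sum_of_subset_of_nonneg hA fun i _ _ => sub_nonneg.mpr (hx (hu i.le_succ))
    _ = x (u 0) - x (u n) := sum_range_sub' (fun i => x (u i)) n

lemma exists_strictMono_tendsto_sum_mul {m : ℕ → ℕ} {d : ℕ → ℕ → ℝ}
    (hd : ∀ n, ∑ i ∈ range (m n), |d n i| ≤ 1) :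
    ∃ φ : ℕ → ℕ, StrictMono φ ∧ ∀ (g : ℕ → ℝ) (L : ℝ), Tendsto g atTop (𝓝 L) →
      ∃ l, Tendsto (fun k => ∑ i ∈ range (m (φ k)), d (φ k) i * g i) atTop (𝓝 l) := by
  set a : ℕ → ℕ → ℝ := fun n i => if i < m n then d n i else 0
  set t : ℕ → ℝ := fun n => ∑ i ∈ range (m n), d n i
  have ha : ∀ n N, ∑ i ∈ range N, |a n i| ≤ 1 := fun n N => calc
    ∑ i ∈ range N, |a n i| = ∑ i ∈ range N with i < m n, |d n i| := by
        rw [sum_filter]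
        exact sum_congr rfl fun i _ => by split_ifs <;> simp [a, *]
    _ ≤ ∑ i ∈ range (m n), |d n i| :=
        sum_le_sum_of_subset_of_nonneg (fun i hi => mem_range.mpr (mem_filter.mp hi).2)
          fun _ _ _ => abs_nonneg _
    _ ≤ 1 := hd n
  have hcube : ∀ n, (a n, t n) ∈ (Set.univ.pi fun _ => Set.Icc (-1 : ℝ) 1) ×ˢ Set.Icc (-1 : ℝ) 1 :=
    fun n => ⟨Set.mem_univ_pi.mpr fun i => abs_le.mp <|
      (single_le_sum (fun j _ => abs_nonneg (a n j)) (self_mem_range_succ i)).trans (ha n (i + 1)),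
      abs_le.mp ((abs_sum_le_sum_abs _ _).trans (hd n))⟩
  obtain ⟨⟨c, τ⟩, -, φ, hφ, hlim⟩ :=
    ((isCompact_univ_pi fun _ => isCompact_Icc).prod isCompact_Icc).tendsto_subseq hcube
  refine ⟨φ, hφ, fun g L hg => ⟨L * τ + ∑' i, c i * (g i - L), ?_⟩⟩
  have hsplit : ∀ n, ∑ i ∈ range (m n), d n i * g i =
      L * t n + ∑ i ∈ range (m n), a n i * (g i - L) := fun n => by
    rw [mul_sum, ← sum_add_distrib]
    exact sum_congr rfl fun i hi => by simp only [a, if_pos (mem_range.mp hi)]; ring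
  simp_rw [hsplit]
  exact (hlim.snd_nhds.const_mul L).add <| tendsto_sum_mul_of_tendsto_zero (fun k => ha (φ k))
    (fun k i hi => if_neg (not_lt.mpr hi)) (fun i => tendsto_pi_nhds.mp hlim.fst_nhds i)
    (by simpa using hg.sub_const L)

lemma bddBelow_decRearrange_set (x : ℕ → ℝ) (n : ℕ) :
    BddBelow {c : ℝ | ∃ F : Finset ℕ, F.card ≤ n ∧ ∀ k ∉ F, |x k| ≤ c} := by
  refine ⟨0, fun c ⟨F, _, hF⟩ => ?_⟩
  obtain ⟨k, hk⟩ := Infinite.exists_notMem_finset F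
  exact (abs_nonneg _).trans (hF k hk)

lemma decRearrange_mono {x y : ℕ → ℝ} (hy : ∃ C, ∀ n, |y n| ≤ C) (h : ∀ n, |x n| ≤ |y n|)
    (n : ℕ) : decRearrange x n ≤ decRearrange y n := by
  obtain ⟨C, hC⟩ := hy
  refine csInf_le_csInf (bddBelow_decRearrange_set x n) ⟨C, ∅, by simp, fun k _ => hC k⟩ ?_
  rintro c ⟨F, hcard, hF⟩
  exact ⟨F, hcard, fun k hk => (h k).trans (hF k hk)⟩

lemma le_decRearrange_of_antitone {s : ℕ → ℝ} (hs : Antitone s) (h0 : 0 ≤ s) (n : ℕ) :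
    s n ≤ decRearrange s n := by
  refine le_csInf ⟨s 0, ∅, by simp, fun k _ => by rw [abs_of_nonneg (h0 k)]; exact hs k.zero_le⟩ ?_
  rintro c ⟨F, hcard, hF⟩
  obtain ⟨k, hk, hkF⟩ : ∃ k ∈ range (n + 1), k ∉ F := by
    by_contra! hsub
    have := card_le_card (s := range (n + 1)) hsub
    simp only [card_range] at this
    omega
  calc s n ≤ s k := hs (Nat.lt_succ_iff.mp (mem_range.mp hk))
    _ = |s k| := (abs_of_nonneg (h0 k)).symm
    _ ≤ c := hF k hkF

/-- The dilation `n ↦ s (n / k)` is the sum over `r < k` of these sequences, and each of them has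
decreasing rearrangement at most `s` when `s` is antitone and nonnegative. -/
def spreadSeq (k r : ℕ) (s : ℕ → ℝ) (n : ℕ) : ℝ :=
  if n % k = r then s (n / k) else 0

lemma decRearrange_spreadSeq_le {s : ℕ → ℝ} (hs : Antitone s) (h0 : 0 ≤ s) (k r n : ℕ) :
    decRearrange (spreadSeq k r s) n ≤ s n := by
  refine csInf_le (bddBelow_decRearrange_set _ n)
    ⟨(range n).image (fun j => k * j + r), card_image_le.trans (card_range n).le, fun i hi => ?_⟩
  unfold spreadSeq
  split_ifs with hir
  · rw [abs_of_nonneg (h0 _)]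
    refine hs (not_lt.mp fun hlt => hi (mem_image.mpr ⟨i / k, mem_range.mpr hlt, ?_⟩))
    rw [← hir, Nat.div_add_mod]
  · simpa using h0 n

lemma sum_spreadSeq {k : ℕ} (hk : 0 < k) (s : ℕ → ℝ) (n : ℕ) :
    ∑ r ∈ range k, spreadSeq k r s n = s (n / k) := by
  simp [spreadSeq, sum_ite_eq, Nat.mod_lt n hk]

namespace BanachSymmSeqSpace

variable (S : BanachSymmSeqSpace)

lemma nrm_nonneg {x : ℕ → ℝ} (hx : x ∈ S.carrier) : 0 ≤ S.nrm x := by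
  rcases eq_or_ne x 0 with rfl | h
  · exact S.nrm_zero.ge
  · exact (S.nrm_pos x hx h).le

lemma sum_mem_and_nrm_sum_le {ι : Type*} (A : Finset ι) {g : ι → ℕ → ℝ}
    (hg : ∀ i ∈ A, g i ∈ S.carrier) :
    ∑ i ∈ A, g i ∈ S.carrier ∧ S.nrm (∑ i ∈ A, g i) ≤ ∑ i ∈ A, S.nrm (g i) := by
  classical
  induction A using Finset.induction_on with
  | empty => simpa [S.nrm_zero] using S.zero_mem
  | insert a A ha ih =>
    obtain ⟨hmem, hnrm⟩ := ih fun i hi => hg i (mem_insert_of_mem hi)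
    have hga := hg a (mem_insert_self a A)
    rw [sum_insert ha, sum_insert ha]
    exact ⟨S.add_mem _ hga _ hmem, (S.nrm_triangle _ hga _ hmem).trans (by linarith)⟩

lemma mem_and_nrm_le_of_abs_le {x y : ℕ → ℝ} (hy : y ∈ S.carrier) (h : ∀ n, |x n| ≤ |y n|) :
    x ∈ S.carrier ∧ S.nrm x ≤ S.nrm y := by
  obtain ⟨C, hC⟩ := S.bdd y hy
  exact S.symmetric x y hy ⟨C, fun n => (h n).trans (hC n)⟩ (decRearrange_mono ⟨C, hC⟩ h)

lemma dilate_mem_and_nrm_le {s : ℕ → ℝ} (hs : s ∈ S.carrier) (hanti : Antitone s) (h0 : 0 ≤ s)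
    {k : ℕ} (hk : 0 < k) :
    (fun n => s (n / k)) ∈ S.carrier ∧ S.nrm (fun n => s (n / k)) ≤ k * S.nrm s := by
  have hspread : ∀ r, spreadSeq k r s ∈ S.carrier ∧ S.nrm (spreadSeq k r s) ≤ S.nrm s := by
    refine fun r => S.symmetric _ s hs ⟨s 0, fun n => ?_⟩ fun n =>
      (decRearrange_spreadSeq_le hanti h0 k r n).trans (le_decRearrange_of_antitone hanti h0 n)
    unfold spreadSeq
    split_ifs
    · rw [abs_of_nonneg (h0 _)]; exact hanti (Nat.zero_le _)
    · simpa using h0 0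
  have hsum : (fun n => s (n / k)) = ∑ r ∈ range k, spreadSeq k r s :=
    funext fun n => by rw [Finset.sum_apply, sum_spreadSeq hk]
  obtain ⟨hmem, hnrm⟩ := S.sum_mem_and_nrm_sum_le (range k) fun r _ => (hspread r).1
  rw [hsum]
  refine ⟨hmem, hnrm.trans ?_⟩
  simpa using sum_le_sum fun r (_ : r ∈ range k) => (hspread r).2

end BanachSymmSeqSpace

section SingularValues

variable {H : Type*} [NormedAddCommGroup H] [InnerProductSpace ℂ H]

def RankLE (F : H →L[ℂ] H) (n : ℕ) : Prop :=
  FiniteDimensional ℂ (LinearMap.range (F : H →ₗ[ℂ] H)) ∧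
    Module.finrank ℂ (LinearMap.range (F : H →ₗ[ℂ] H)) ≤ n

namespace RankLE

variable {F G : H →L[ℂ] H} {m n : ℕ}

lemma zero : RankLE (0 : H →L[ℂ] H) n := by
  rw [RankLE, ContinuousLinearMap.toLinearMap_zero, LinearMap.range_zero]
  exact ⟨inferInstance, by simp⟩

lemma of_range_le (hF : RankLE F n)
    (h : LinearMap.range (G : H →ₗ[ℂ] H) ≤ LinearMap.range (F : H →ₗ[ℂ] H)) : RankLE G n :=
  have := hF.1
  ⟨Submodule.finiteDimensional_of_le h, (Submodule.finrank_mono h).trans hF.2⟩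

lemma add (hF : RankLE F m) (hG : RankLE G n) : RankLE (F + G) (m + n) := by
  have := hF.1
  have := hG.1
  have h := LinearMap.range_add_le (F : H →ₗ[ℂ] H) G
  exact ⟨Submodule.finiteDimensional_of_le h, (Submodule.finrank_mono h).trans
    ((Submodule.finrank_add_le_finrank_add_finrank _ _).trans (add_le_add hF.2 hG.2))⟩

lemma smul (hF : RankLE F n) (c : ℂ) : RankLE (c • F) n :=
  hF.of_range_le (LinearMap.range_smul_le_range (F : H →ₗ[ℂ] H) c)

lemma mul_right (hF : RankLE F n) (T : H →L[ℂ] H) : RankLE (F * T) n :=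
  hF.of_range_le <| by
    rw [ContinuousLinearMap.toLinearMap_mul]
    exact LinearMap.range_comp_le_range (T : H →ₗ[ℂ] H) (F : H →ₗ[ℂ] H)

lemma mul_left (hF : RankLE F n) (T : H →L[ℂ] H) : RankLE (T * F) n := by
  have := hF.1
  rw [RankLE, ContinuousLinearMap.toLinearMap_mul, Module.End.mul_eq_comp, LinearMap.range_comp]
  exact ⟨inferInstance, (Submodule.finrank_map_le _ _).trans hF.2⟩

end RankLE

variable {x : H →L[ℂ] H} {n : ℕ}

lemma singVal_le_norm_sub {F : H →L[ℂ] H} (hF : RankLE F n) : singVal x n ≤ ‖x - F‖ :=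
  csInf_le ⟨0, by rintro _ ⟨G, -, -, rfl⟩; exact norm_nonneg _⟩ ⟨F, hF.1, hF.2, rfl⟩

lemma le_singVal {c : ℝ} (h : ∀ F, RankLE F n → c ≤ ‖x - F‖) : c ≤ singVal x n :=
  le_csInf ⟨_, 0, (RankLE.zero (n := n)).1, RankLE.zero.2, rfl⟩
    fun _ ⟨F, h1, h2, hc⟩ => hc ▸ h F ⟨h1, h2⟩

lemma singVal_nonneg (x : H →L[ℂ] H) (n : ℕ) : 0 ≤ singVal x n :=
  le_singVal fun _ _ => norm_nonneg _

lemma singVal_antitone (x : H →L[ℂ] H) : Antitone (singVal x) :=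
  fun _ _ hmn => le_singVal fun _ hF => singVal_le_norm_sub ⟨hF.1, hF.2.trans hmn⟩

lemma singVal_zero (n : ℕ) : singVal (0 : H →L[ℂ] H) n = 0 :=
  le_antisymm (by simpa using singVal_le_norm_sub (x := (0 : H →L[ℂ] H)) (RankLE.zero (n := n)))
    (singVal_nonneg _ _)

lemma singVal_add_le (a b : H →L[ℂ] H) (m n : ℕ) :
    singVal (a + b) (m + n) ≤ singVal a m + singVal b n := by
  suffices ∀ G, RankLE G n → singVal (a + b) (m + n) - ‖b - G‖ ≤ singVal a m by
    linarith [le_singVal fun G hG => (sub_le_comm.mp (this G hG))]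
  refine fun G hG => le_singVal fun F hF => ?_
  have hFG := singVal_le_norm_sub (x := a + b) (hF.add hG)
  rw [show a + b - (F + G) = a - F + (b - G) by abel] at hFG
  linarith [norm_add_le (a - F) (b - G)]

lemma singVal_smul_le (c : ℂ) (x : H →L[ℂ] H) (n : ℕ) :
    singVal (c • x) n ≤ ‖c‖ * singVal x n := by
  rcases eq_or_ne c 0 with rfl | hc
  · simp [singVal_zero]
  have hc' : 0 < ‖c‖ := norm_pos_iff.mpr hc
  rw [← div_le_iff₀' hc']
  refine le_singVal fun F hF => ?_
  rw [div_le_iff₀' hc', ← norm_smul, smul_sub]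
  exact singVal_le_norm_sub (hF.smul c)

/-- Compressing by the projection `P` onto `(range F)ᗮ` changes `a` by an operator of rank `≤ 2n`,
and `‖P a P‖ ≤ ‖P b P‖ = ‖P (b - F) P‖ ≤ ‖b - F‖`. -/
lemma singVal_add_self_le_of_le [CompleteSpace H] {a b : H →L[ℂ] H} (ha : 0 ≤ a) (hab : a ≤ b)
    (n : ℕ) : singVal a (n + n) ≤ singVal b n := by
  refine le_singVal fun F hF => ?_
  have := hF.1
  set V := LinearMap.range (F : H →ₗ[ℂ] H)
  set Q := V.starProjection
  set P := Vᗮ.starProjection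
  have hPQ : P = 1 - Q := V.starProjection_orthogonal'
  have hP : IsSelfAdjoint P := isStarProjection_starProjection.isSelfAdjoint
  have hQ : RankLE Q n := by
    rw [RankLE, V.range_starProjection]
    exact hF
  have hPF : P * F = 0 := by
    ext ξ
    exact Submodule.starProjection_orthogonal_apply_eq_zero (LinearMap.mem_range_self _ ξ)
  have hrank : RankLE (a - P * a * P) (n + n) := by
    rw [show a - P * a * P = Q * a + P * a * Q by rw [hPQ]; noncomm_ring]
    exact (hQ.mul_right a).add (hQ.mul_left (P * a))
  calc singVal a (n + n) ≤ ‖a - (a - P * a * P)‖ := singVal_le_norm_sub hrank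
    _ = ‖P * a * P‖ := by rw [sub_sub_cancel]
    _ ≤ ‖P * b * P‖ := CStarAlgebra.norm_le_norm_of_nonneg_of_le
        (hP.conjugate_nonneg ha) (hP.conjugate_le_conjugate hab)
    _ = ‖P * (b - F) * P‖ := by rw [mul_sub, hPF, sub_zero]
    _ ≤ ‖P‖ * ‖b - F‖ * ‖P‖ := norm_mul₃_le
    _ ≤ 1 * ‖b - F‖ * 1 := by gcongr <;> exact Vᗮ.starProjection_norm_le
    _ = ‖b - F‖ := by ring

end SingularValues

section SymmetricIdeal

variable {H : Type*} [NormedAddCommGroup H] [InnerProductSpace ℂ H] {S : BanachSymmSeqSpace}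
  {a b : H →L[ℂ] H}

lemma CEnorm_nonneg (ha : a ∈ CE S) : 0 ≤ CEnorm S a :=
  S.nrm_nonneg ha.2

lemma mem_CE_and_CEnorm_le_of_singVal_le (ha : IsCompactOperator a) {s : ℕ → ℝ}
    (hs : s ∈ S.carrier) (hanti : Antitone s) (h0 : 0 ≤ s) (h : ∀ n, singVal a n ≤ s (n / 2)) :
    a ∈ CE S ∧ CEnorm S a ≤ 2 * S.nrm s := by
  obtain ⟨hmem, hnrm⟩ := S.dilate_mem_and_nrm_le hs hanti h0 two_pos
  obtain ⟨hmem', hnrm'⟩ := S.mem_and_nrm_le_of_abs_le hmem fun n => by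
    rw [abs_of_nonneg (singVal_nonneg a n), abs_of_nonneg (h0 _)]
    exact h n
  exact ⟨⟨ha, hmem'⟩, hnrm'.trans (by exact_mod_cast hnrm)⟩

lemma add_mem_CE (ha : a ∈ CE S) (hb : b ∈ CE S) : a + b ∈ CE S := by
  refine (mem_CE_and_CEnorm_le_of_singVal_le (a := a + b) (ha.1.add hb.1) (S.add_mem _ ha.2 _ hb.2)
    ((singVal_antitone a).add (singVal_antitone b))
    (fun n => add_nonneg (singVal_nonneg a n) (singVal_nonneg b n)) fun n => ?_).1
  calc singVal (a + b) n ≤ singVal (a + b) (n / 2 + n / 2) := singVal_antitone _ (by omega)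
    _ ≤ singVal a (n / 2) + singVal b (n / 2) := singVal_add_le a b _ _

lemma smul_mem_CE (c : ℂ) (ha : a ∈ CE S) : c • a ∈ CE S := by
  refine ⟨ha.1.smul c, (S.mem_and_nrm_le_of_abs_le (S.smul_mem ‖c‖ _ ha.2) fun n => ?_).1⟩
  rw [abs_of_nonneg (singVal_nonneg _ n), Pi.smul_apply, smul_eq_mul,
    abs_of_nonneg (mul_nonneg (norm_nonneg c) (singVal_nonneg a n))]
  exact singVal_smul_le c a n

lemma mem_CE_and_CEnorm_le_of_le [CompleteSpace H] (ha : IsCompactOperator a) (ha0 : 0 ≤ a)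
    (hab : a ≤ b) (hb : b ∈ CE S) : a ∈ CE S ∧ CEnorm S a ≤ 2 * CEnorm S b :=
  mem_CE_and_CEnorm_le_of_singVal_le ha hb.2 (singVal_antitone b) (singVal_nonneg b)
    fun n => (singVal_antitone a (by omega : n / 2 + n / 2 ≤ n)).trans
      (singVal_add_self_le_of_le ha0 hab _)

variable [CompleteSpace H]

lemma zero_mem_CEh : (0 : H →L[ℂ] H) ∈ CEh S := by
  refine ⟨⟨isCompactOperator_zero, ?_⟩, IsSelfAdjoint.zero _⟩
  rw [show (fun n => singVal (0 : H →L[ℂ] H) n) = 0 from funext singVal_zero]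
  exact S.zero_mem

lemma add_mem_CEh (ha : a ∈ CEh S) (hb : b ∈ CEh S) : a + b ∈ CEh S :=
  ⟨add_mem_CE ha.1 hb.1, ha.2.add hb.2⟩

lemma ofReal_smul_mem_CEh (c : ℝ) (ha : a ∈ CEh S) : (c : ℂ) • a ∈ CEh S :=
  ⟨smul_mem_CE _ ha.1, IsSelfAdjoint.smul (Complex.conj_ofReal c) ha.2⟩

lemma sum_mem_CEh {ι : Type*} {s : Finset ι} {v : ι → H →L[ℂ] H} (hv : ∀ i ∈ s, v i ∈ CEh S) :
    ∑ i ∈ s, v i ∈ CEh S :=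
  Finset.sum_induction v (· ∈ CEh S) (fun _ _ => add_mem_CEh) zero_mem_CEh hv

end SymmetricIdeal

namespace RealFunctionalOn

variable {H : Type*} [NormedAddCommGroup H] [InnerProductSpace ℂ H] [CompleteSpace H]
  {S : BanachSymmSeqSpace} {f : (H →L[ℂ] H) → ℝ}

lemma map_sum (hf : RealFunctionalOn S f) {ι : Type*} {s : Finset ι} {v : ι → H →L[ℂ] H}
    (hv : ∀ i ∈ s, v i ∈ CEh S) : f (∑ i ∈ s, v i) = ∑ i ∈ s, f (v i) := by
  classical
  induction s using Finset.induction_on with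
  | empty =>
    have h := hf.1 0 zero_mem_CEh 0 zero_mem_CEh
    rw [add_zero] at h
    simpa using h
  | insert j s hj ih =>
    have hs : ∀ i ∈ s, v i ∈ CEh S := fun i hi => hv i (mem_insert_of_mem hi)
    rw [sum_insert hj, sum_insert hj, hf.1 _ (hv j (mem_insert_self j s)) _ (sum_mem_CEh hs), ih hs]

lemma map_sum_ofReal_smul (hf : RealFunctionalOn S f) {ι : Type*} {s : Finset ι} (c : ι → ℝ)
    {v : ι → H →L[ℂ] H} (hv : ∀ i ∈ s, v i ∈ CEh S) :
    f (∑ i ∈ s, (c i : ℂ) • v i) = ∑ i ∈ s, c i * f (v i) := by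
  rw [hf.map_sum fun i hi => ofReal_smul_mem_CEh (c i) (hv i hi)]
  exact sum_congr rfl fun i hi => hf.2.1 _ _ (hv i hi)

lemma cauchySeq_comp_of_antitone (hf : RealFunctionalOn S f) {x : ℕ → H →L[ℂ] H}
    (hmem : ∀ n, x n ∈ CE S) (hx0 : ∀ n, 0 ≤ x n) (hx : Antitone x) :
    CauchySeq fun n => f (x n) := by
  obtain ⟨M, hM⟩ := hf.2.2
  refine cauchySeq_of_sum_dist_le (C := 2 * (|M| * (2 * CEnorm S (x 0)))) fun u hu n => ?_
  set z : ℕ → H →L[ℂ] H := fun i => x (u i) - x (u (i + 1))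
  have hz : ∀ A ⊆ range n, ∑ i ∈ A, z i ∈ CEh S ∧ CEnorm S (∑ i ∈ A, z i) ≤ 2 * CEnorm S (x 0) := by
    intro A hA
    have hcpt : IsCompactOperator ⇑(∑ i ∈ A, z i) :=
      (compactOperator (RingHom.id ℂ) H H).sum_mem fun i _ =>
        show z i ∈ compactOperator (RingHom.id ℂ) H H from (hmem _).1.sub (hmem _).1
    have hnonneg : 0 ≤ ∑ i ∈ A, z i := sum_nonneg fun i _ => sub_nonneg.mpr (hx (hu i.le_succ))
    have hle : ∑ i ∈ A, z i ≤ x 0 := (sum_sub_le_sub_of_antitone hx hu hA).trans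
      ((sub_le_self _ (hx0 _)).trans (hx (Nat.zero_le _)))
    obtain ⟨hmem', hnrm⟩ := mem_CE_and_CEnorm_le_of_le hcpt hnonneg hle (hmem 0)
    exact ⟨⟨hmem', IsSelfAdjoint.of_nonneg hnonneg⟩, hnrm⟩
  have hzi : ∀ i ∈ range n, z i ∈ CEh S := fun i hi => by
    simpa using (hz {i} (singleton_subset_iff.mpr hi)).1
  have hdist : ∀ i ∈ range n, dist (f (x (u (i + 1)))) (f (x (u i))) = |f (z i)| := by
    intro i hi
    have hxi : x (u (i + 1)) ∈ CEh S := ⟨hmem _, IsSelfAdjoint.of_nonneg (hx0 _)⟩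
    rw [Real.dist_eq, abs_sub_comm, ← sub_add_cancel (x (u i)) (x (u (i + 1))),
      hf.1 _ (hzi i hi) _ hxi, add_sub_cancel_right]
  rw [sum_congr rfl hdist]
  refine sum_abs_le_two_mul_of_forall_abs_sum_le _ _ fun A hA => ?_
  rw [← hf.map_sum fun i hi => hzi i (hA hi)]
  calc |f (∑ i ∈ A, z i)| ≤ M * CEnorm S (∑ i ∈ A, z i) := hM _ (hz A hA).1
    _ ≤ |M| * CEnorm S (∑ i ∈ A, z i) := by
        gcongr
        · exact CEnorm_nonneg (hz A hA).1.1
        · exact le_abs_self M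
    _ ≤ |M| * (2 * CEnorm S (x 0)) := by gcongr; exact (hz A hA).2

end RealFunctionalOn

theorem absolutely_convex_hull_rosenthal_general
    {H : Type*} [NormedAddCommGroup H] [InnerProductSpace ℂ H] [CompleteSpace H]
    (S : BanachSymmSeqSpace)
    (x : ℕ → H →L[ℂ] H) (hmem : ∀ n, x n ∈ CE (H := H) S)
    (hpos : ∀ n, (x n).IsPositive)
    (hdec : ∀ n, (x n - x (n + 1)).IsPositive) :
    ∀ y : ℕ → H →L[ℂ] H,
      (∀ n, ∃ (m : ℕ) (c : ℕ → ℝ), (∑ i ∈ Finset.range m, |c i|) ≤ 1 ∧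
        y n = ∑ i ∈ Finset.range m, ((c i : ℂ)) • x i) →
      ∃ φ : ℕ → ℕ, StrictMono φ ∧
        ∀ f : (H →L[ℂ] H) → ℝ, RealFunctionalOn S f →
          ∃ L : ℝ, Filter.Tendsto (fun i => f (y (φ i))) Filter.atTop (nhds L) := by
  intro y hy
  choose m c hc hy using hy
  obtain ⟨φ, hφ, hlim⟩ := exists_strictMono_tendsto_sum_mul hc
  refine ⟨φ, hφ, fun f hf => ?_⟩
  have hx0 : ∀ n, 0 ≤ x n := fun n => (ContinuousLinearMap.nonneg_iff_isPositive _).mpr (hpos n)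
  have hx : Antitone x :=
    antitone_nat_of_succ_le fun n => (ContinuousLinearMap.le_def _ _).mpr (hdec n)
  have hxh : ∀ n, x n ∈ CEh S := fun n => ⟨hmem n, IsSelfAdjoint.of_nonneg (hx0 n)⟩
  obtain ⟨L, hL⟩ := cauchySeq_tendsto_of_complete (hf.cauchySeq_comp_of_antitone hmem hx0 hx)
  obtain ⟨l, hl⟩ := hlim _ L hL
  exact ⟨l, hl.congr fun k => by rw [hy, hf.map_sum_ofReal_smul _ fun i _ => hxh i]⟩

/-- If `x_n ∈ C_E` are positive operators decreasing to `0` in the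
operator order, then the absolutely convex hull of `{0, x_1, x_2, …}` in the real Banach
space `C_E^h` is a Rosenthal set: every sequence in it admits a weakly Cauchy subsequence. -/
theorem absolutely_convex_hull_rosenthal
    {H : Type*} [NormedAddCommGroup H] [InnerProductSpace ℂ H] [CompleteSpace H]
    [TopologicalSpace.SeparableSpace H] (hinf : ¬ FiniteDimensional ℂ H)
    (S : BanachSymmSeqSpace) (hc0 : S.SubsetC0)
    (x : ℕ → H →L[ℂ] H) (hmem : ∀ n, x n ∈ CE (H := H) S)
    (hpos : ∀ n, (x n).IsPositive)
    (hdec : ∀ n, (x n - x (n + 1)).IsPositive)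
    (hinf0 : ∀ z : H →L[ℂ] H, (∀ n, (x n - z).IsPositive) → (-z).IsPositive) :
    ∀ y : ℕ → H →L[ℂ] H,
      (∀ n, ∃ (m : ℕ) (c : ℕ → ℝ), (∑ i ∈ Finset.range m, |c i|) ≤ 1 ∧
        y n = ∑ i ∈ Finset.range m, ((c i : ℂ)) • x i) →
      ∃ φ : ℕ → ℕ, StrictMono φ ∧
        ∀ f : (H →L[ℂ] H) → ℝ, RealFunctionalOn S f →
          ∃ L : ℝ, Filter.Tendsto (fun i => f (y (φ i))) Filter.atTop (nhds L) :=
  absolutely_convex_hull_rosenthal_general S x hmem hpos hdec
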